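/- Let n ≥ 2. In the root system of type C_n, the minimum, over unordered pairs {α_i, α_j} of distinct simple roots in Π, of the resonant codimension of Π ∖ {α_i, α_j} equals 4n − 4. -/

import Mathlib

/-!
The partial sums `ϖ_k(v) = v₀ + ⋯ + v_k` are, up to a factor 2 at `k = n - 1`, the basis dual to
the simple roots, so a vector lies in the span of `Π ∖ {α_a, α_b}` exactly when `ϖ_a` and `ϖ_b` vanish
on it. For `a < b` the positive roots killed by both are `e_i - e_j` with `i < j` in the same block
of `[0, a] ⊔ (a, b] ⊔ (b, n)` and `e_i + e_j` with `i, j > b`. Writing `s, t, u` for the block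
sizes, there are `C(s,2) + C(t,2) + u²` of them out of `n²` positive roots, and with `s, t ≥ 1`
this is at most `(n - 2)²`, attained at `(a, b) = (0, 1)`; hence the minimum is
`n² - (n - 2)² = 4n - 4`.
-/

open Module Submodule in
theorem mem_span_image_iff_of_dual_eq_zero {ι K V : Type*} [Fintype ι] [Field K]
    [AddCommGroup V] [Module K V] [FiniteDimensional K V] {v : ι → V} {f : ι → Dual K V}
    (hcard : Fintype.card ι = finrank K V) (h0 : Pairwise fun i j ↦ f i (v j) = 0)
    (h1 : ∀ i, f i (v i) ≠ 0) {s : Set ι} {x : V} :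
    x ∈ span K (v '' s) ↔ ∀ i ∉ s, f i x = 0 := by
  have hli : LinearIndependent K v :=
    .of_pairwise_dual_eq_zero_one v (fun i ↦ (f i (v i))⁻¹ • f i)
      (fun i j hij ↦ by simp [h0 hij]) (fun i ↦ by simp [h1 i])
  let b := basisOfLinearIndependentOfCardEqFinrank' v hli hcard
  have hfx : ∀ i, f i x = b.repr x i * f i (v i) := fun i ↦ by
    conv_lhs => rw [← b.sum_repr x]
    rw [map_sum, Finset.sum_eq_single i (fun j _ hji ↦ by simp [b, h0 hji.symm]) (by simp)]
    simp [b]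
  rw [← coe_basisOfLinearIndependentOfCardEqFinrank' v hli hcard, Basis.mem_span_image]
  simp only [Set.subset_def, Finset.mem_coe, Finsupp.mem_support_iff, hfx, mul_eq_zero, h1,
    or_false]
  exact forall_congr' fun i ↦ not_imp_comm

noncomputable def resonantCodim {V : Type*} [AddCommGroup V] [Module ℝ V]
    (positiveRoots simpleRoots : Set V) : ℕ :=
  Set.ncard {v | v ∈ positiveRoots ∧ v ∉ Submodule.span ℝ simpleRoots}

lemma Nat.choose_two_le_sq_pred (m : ℕ) : m.choose 2 ≤ (m - 1) ^ 2 := by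
  rw [Nat.choose_two_right]
  apply Nat.div_le_of_le_mul
  rcases m with _ | m
  · simp
  · simp only [Nat.add_sub_cancel]
    nlinarith

lemma Nat.choose_two_add_choose_two_add_sq_le {s t u : ℕ} (hs : 1 ≤ s) (ht : 1 ≤ t) :
    s.choose 2 + t.choose 2 + u ^ 2 ≤ (s + t + u - 2) ^ 2 := by
  obtain ⟨x, rfl⟩ : ∃ x, s = x + 1 := ⟨s - 1, by omega⟩
  obtain ⟨y, rfl⟩ : ∃ y, t = y + 1 := ⟨t - 1, by omega⟩
  have hx := choose_two_le_sq_pred (x + 1)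
  have hy := choose_two_le_sq_pred (y + 1)
  rw [show x + 1 + (y + 1) + u - 2 = x + y + u by omega]
  simp only [Nat.add_sub_cancel] at hx hy
  calc _ ≤ x ^ 2 + y ^ 2 + u ^ 2 := by gcongr
    _ ≤ (x + y + u) ^ 2 := by
      nlinarith [Nat.zero_le (x * y), Nat.zero_le (x * u), Nat.zero_le (y * u)]

lemma Nat.sq_sub_sq_sub_two {m : ℕ} (hm : 2 ≤ m) : m ^ 2 - (m - 2) ^ 2 = 4 * m - 4 := by
  obtain ⟨k, rfl⟩ : ∃ k, m = k + 2 := ⟨m - 2, by omega⟩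
  rw [Nat.add_sub_cancel, Nat.sub_eq_of_eq_add]
  ring_nf
  omega

namespace TypeC

open Finset Module Submodule

variable {n : ℕ}

def positiveRoots (n : ℕ) : Set (Fin n → ℝ) :=
  {v | (∃ i j : Fin n, i < j ∧ (v = Pi.single i 1 - Pi.single j 1 ∨
      v = Pi.single i 1 + Pi.single j 1)) ∨ ∃ i : Fin n, v = (2 : ℝ) • Pi.single i 1}

def simpleRoot (k : Fin n) : Fin n → ℝ :=
  if h : (k : ℕ) + 1 < n then Pi.single k 1 - Pi.single ⟨(k : ℕ) + 1, h⟩ 1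
  else (2 : ℝ) • Pi.single k 1

/-- A bijective indexing of the `n²` positive roots by `Fin n × Fin n`. -/
def posRoot (p : Fin n × Fin n) : Fin n → ℝ :=
  if p.1 < p.2 then Pi.single p.1 1 - Pi.single p.2 1 else Pi.single p.2 1 + Pi.single p.1 1

def partialSum (k : Fin n) : Dual ℝ (Fin n → ℝ) := ∑ j ∈ Iic k, LinearMap.proj j

lemma range_posRoot : Set.range (posRoot (n := n)) = positiveRoots n := by
  ext v
  constructor
  · rintro ⟨⟨i, j⟩, rfl⟩
    rcases lt_trichotomy i j with hij | rfl | hji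
    · exact .inl ⟨i, j, hij, .inl (if_pos hij)⟩
    · exact .inr ⟨i, by simp [posRoot, two_smul]⟩
    · exact .inl ⟨j, i, hji, .inr (if_neg hji.not_gt)⟩
  · rintro (⟨i, j, hij, rfl | rfl⟩ | ⟨i, rfl⟩)
    · exact ⟨(i, j), if_pos hij⟩
    · exact ⟨(j, i), if_neg hij.not_gt⟩
    · exact ⟨(i, i), by simp [posRoot, two_smul]⟩

lemma posRoot_injective : Function.Injective (posRoot (n := n)) := by
  intro p q h
  have h1 := congrFun h p.1
  have h2 := congrFun h p.2
  have h3 := congrFun h q.1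
  have h4 := congrFun h q.2
  simp only [posRoot] at h1 h2 h3 h4
  split_ifs at h1 h2 h3 h4 <;> simp [Pi.single_apply] at h1 h2 h3 h4 <;> grind

lemma partialSum_single (k i : Fin n) :
    partialSum k (Pi.single i 1) = if i ≤ k then 1 else 0 := by
  simp [partialSum, Pi.single_apply]

lemma partialSum_simpleRoot_eq_zero_iff (k j : Fin n) :
    partialSum k (simpleRoot j) = 0 ↔ k ≠ j := by
  unfold simpleRoot
  split_ifs with h
  · simp only [map_sub, partialSum_single, Fin.le_def, ne_eq, Fin.ext_iff]
    split_ifs <;> norm_num <;> omega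
  · simp only [map_smul, partialSum_single, Fin.le_def, ne_eq, Fin.ext_iff]
    have := k.isLt
    split_ifs <;> norm_num <;> omega

lemma partialSum_posRoot_eq_zero_iff (k : Fin n) (p : Fin n × Fin n) :
    partialSum k (posRoot p) = 0 ↔
      if p.1 < p.2 then (p.1 ≤ k ↔ p.2 ≤ k) else k < p.1 ∧ k < p.2 := by
  unfold posRoot
  split_ifs with h
  · simp only [map_sub, partialSum_single]
    split_ifs <;> norm_num <;> tauto
  · simp only [map_add, partialSum_single]
    split_ifs <;> norm_num <;> grind

lemma mem_span_simpleRoot_diff_pair_iff (a b : Fin n) (v : Fin n → ℝ) :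
    v ∈ span ℝ (Set.range simpleRoot \ {simpleRoot a, simpleRoot b}) ↔
      partialSum a v = 0 ∧ partialSum b v = 0 := by
  have h0 : Pairwise fun k j : Fin n ↦ partialSum k (simpleRoot j) = 0 := fun k j hkj ↦
    (partialSum_simpleRoot_eq_zero_iff k j).2 hkj
  have h1 : ∀ k : Fin n, partialSum k (simpleRoot k) ≠ 0 := fun k ↦ by
    simp [partialSum_simpleRoot_eq_zero_iff]
  have hinj : Function.Injective (simpleRoot (n := n)) := fun i j hij ↦
    by_contra fun hne ↦ h1 i (by rw [hij]; exact h0 hne)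
  rw [← Set.image_pair, ← Set.image_compl_eq_range_sdiff_image hinj,
    mem_span_image_iff_of_dual_eq_zero (by simp) h0 h1]
  simp only [Set.mem_compl_iff, not_not, Set.mem_insert_iff, Set.mem_singleton_iff, or_imp,
    forall_and, forall_eq]

/-- Indices of the positive roots in the span of `Π ∖ {α_a, α_b}` (the Levi subsystem). -/
noncomputable def leviPairs (a b : Fin n) : Finset (Fin n × Fin n) :=
  {p | partialSum a (posRoot p) = 0 ∧ partialSum b (posRoot p) = 0}

lemma resonantCodim_eq_card_compl_leviPairs (a b : Fin n) :
    resonantCodim (positiveRoots n) (Set.range simpleRoot \ {simpleRoot a, simpleRoot b}) =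
      #(leviPairs a b)ᶜ := by
  set S := span ℝ (Set.range simpleRoot \ {simpleRoot a, simpleRoot b})
  have hpre : posRoot ⁻¹' {v | v ∉ S} = ↑(leviPairs a b)ᶜ := by
    ext p
    simp [S, leviPairs, mem_span_simpleRoot_diff_pair_iff]
  have hset : {v | v ∈ positiveRoots n ∧ v ∉ S} = posRoot '' ↑(leviPairs a b)ᶜ := by
    rw [← hpre, Set.image_preimage_eq_range_inter, range_posRoot]
    rfl
  rw [resonantCodim, hset, Set.ncard_image_of_injective _ posRoot_injective, Set.ncard_coe_finset]

lemma leviPairs_eq {a b : Fin n} (hab : a < b) :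
    leviPairs a b = {p ∈ Iic a ×ˢ Iic a | p.1 < p.2} ∪ {p ∈ Ioc a b ×ˢ Ioc a b | p.1 < p.2} ∪
      Ioi b ×ˢ Ioi b := by
  ext ⟨i, j⟩
  simp only [leviPairs, partialSum_posRoot_eq_zero_iff, mem_filter, mem_univ, true_and,
    mem_union, mem_product, mem_Iic, mem_Ioc, mem_Ioi]
  rw [Fin.lt_def] at hab
  split_ifs with h <;> simp only [Fin.lt_def, Fin.le_def] at * <;> omega

lemma card_leviPairs {a b : Fin n} (hab : a < b) :
    #(leviPairs a b) = ((a : ℕ) + 1).choose 2 + ((b : ℕ) - a).choose 2 + (n - 1 - b) ^ 2 := by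
  rw [leviPairs_eq hab, card_union_of_disjoint, card_union_of_disjoint, card_product_filter_lt,
    card_product_filter_lt, card_product, Fin.card_Iic, Fin.card_Ioc, Fin.card_Ioi, sq]
  all_goals
    rw [disjoint_left]
    rintro ⟨i, j⟩
    simp only [mem_filter, mem_union, mem_product, mem_Iic, mem_Ioc, mem_Ioi]
    rw [Fin.lt_def] at hab
    simp only [Fin.lt_def, Fin.le_def]
    omega

lemma card_leviPairs_le {a b : Fin n} (hab : a < b) : #(leviPairs a b) ≤ (n - 2) ^ 2 := by
  rw [card_leviPairs hab]
  rw [Fin.lt_def] at hab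
  have := Nat.choose_two_add_choose_two_add_sq_le (u := n - 1 - b) (Nat.le_add_left 1 a)
    (Nat.sub_pos_of_lt hab)
  rwa [show (a : ℕ) + 1 + (b - a) + (n - 1 - b) - 2 = n - 2 by omega] at this

lemma card_leviPairs_zero_one (hn : 2 ≤ n) :
    #(leviPairs (⟨0, by omega⟩ : Fin n) ⟨1, hn⟩) = (n - 2) ^ 2 := by
  rw [card_leviPairs (Fin.mk_lt_mk.2 zero_lt_one)]
  simp [Nat.sub_sub]

lemma four_mul_sub_four_le_resonantCodim {a b : Fin n} (hab : a ≠ b) :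
    4 * n - 4 ≤
      resonantCodim (positiveRoots n) (Set.range simpleRoot \ {simpleRoot a, simpleRoot b}) := by
  wlog hlt : a < b generalizing a b
  · rw [Set.pair_comm]
    exact this hab.symm (lt_of_le_of_ne (not_lt.1 hlt) hab.symm)
  have hn : 2 ≤ n := by have := b.isLt; rw [Fin.lt_def] at hlt; omega
  rw [resonantCodim_eq_card_compl_leviPairs, card_compl, Fintype.card_prod, Fintype.card_fin,
    ← sq, ← Nat.sq_sub_sq_sub_two hn]
  exact Nat.sub_le_sub_left (card_leviPairs_le hlt) _

lemma resonantCodim_zero_one (hn : 2 ≤ n) :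
    resonantCodim (positiveRoots n)
      (Set.range simpleRoot \ {simpleRoot ⟨0, by omega⟩, simpleRoot ⟨1, hn⟩}) = 4 * n - 4 := by
  rw [resonantCodim_eq_card_compl_leviPairs, card_compl, Fintype.card_prod, Fintype.card_fin,
    card_leviPairs_zero_one hn, ← sq, Nat.sq_sub_sq_sub_two hn]

end TypeC

/-- In the root system of type `C_n` (`n ≥ 2`), the minimum over unordered pairs of distinct
simple roots `{α_i, α_j}` of the resonant codimension of `Π \ {α_i, α_j}` equals `4n - 4`. -/
theorem stmt7 (n : ℕ) (hn : 2 ≤ n) :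
    let e : Fin n → (Fin n → ℝ) := fun i => Pi.single i 1
    let Sp : Set (Fin n → ℝ) :=
      {v | (∃ i j : Fin n, i < j ∧ (v = e i - e j ∨ v = e i + e j)) ∨
        ∃ i : Fin n, v = (2 : ℝ) • e i}
    let α : Fin n → (Fin n → ℝ) := fun k =>
      if h : (k : ℕ) + 1 < n then e k - e ⟨(k : ℕ) + 1, h⟩ else (2 : ℝ) • e k
    let rc : Set (Fin n → ℝ) → ℕ := fun Pi' =>
      Set.ncard {v | v ∈ Sp ∧ v ∉ Submodule.span ℝ Pi'}
    (⨅ p : {p : Fin n × Fin n // p.1 ≠ p.2},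
      rc (Set.range α \ {α p.val.1, α p.val.2})) = 4 * n - 4 := by
  show (⨅ p : {p : Fin n × Fin n // p.1 ≠ p.2}, resonantCodim (TypeC.positiveRoots n)
    (Set.range TypeC.simpleRoot \ {TypeC.simpleRoot p.val.1, TypeC.simpleRoot p.val.2})) = _
  let p₀ : {p : Fin n × Fin n // p.1 ≠ p.2} := ⟨(⟨0, by omega⟩, ⟨1, hn⟩), by simp [Fin.ext_iff]⟩
  have : Nonempty {p : Fin n × Fin n // p.1 ≠ p.2} := ⟨p₀⟩
  exact le_antisymm ((ciInf_le (OrderBot.bddBelow _) p₀).trans (TypeC.resonantCodim_zero_one hn).le)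
    (le_ciInf fun p ↦ TypeC.four_mul_sub_four_le_resonantCodim p.2)
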